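/- arXiv:1612.05602 — 5 statements merged into one kernel-verified Lean document; each statement's English description precedes it below -/
import Mathlib

section
/- Let g(t) be the 4×4 matrix with g₁₁ = 1+t², g₁₄ = g₄₁ = t, g₂₂ = g₃₃ = g₄₄ = 1, other entries 0. Then for all t > 0, g(t) = exp((1/2)R(t)(X⊗X − Y⊗Y) + (t/4)R(t)(Z⊗I + I⊗Z)), where R(t) = (1+t²/4)^{−1/2} · log(1 + t√(1+t²/4) + t²/2). -/
open Kronecker Complex

noncomputable def PauliX : Matrix (Fin 2) (Fin 2) ℂ := !![0, 1; 1, 0]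
noncomputable def PauliY : Matrix (Fin 2) (Fin 2) ℂ := !![0, -I; I, 0]
noncomputable def PauliZ : Matrix (Fin 2) (Fin 2) ℂ := !![1, 0; 0, -1]

/-- Reindex a `(Fin 2 × Fin 2)`-indexed matrix as a `Fin 4`-indexed matrix. -/
noncomputable def K (M : Matrix (Fin 2 × Fin 2) (Fin 2 × Fin 2) ℂ) : Matrix (Fin 4) (Fin 4) ℂ :=
  Matrix.reindex finProdFinEquiv finProdFinEquiv M

noncomputable def gMat (t : ℝ) : Matrix (Fin 4) (Fin 4) ℂ :=
  !![1 + (t:ℂ)^2, 0, 0, (t:ℂ); 0, 1, 0, 0; 0, 0, 1, 0; (t:ℂ), 0, 0, 1]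

noncomputable def R (t : ℝ) : ℝ :=
  Real.log (1 + t * Real.sqrt (1 + t ^ 2 / 4) + t ^ 2 / 2) / Real.sqrt (1 + t ^ 2 / 4)

/-! The generator `A` vanishes on `|01⟩, |10⟩` and acts on the span of `|00⟩, |11⟩` as
`R(t) N(t)` with `N(t) = [[t/2, 1], [1, -t/2]]`. Since `N(t)² = (1 + t²/4) I`, the exponential
collapses to `cosh θ + (sinh θ / θ) A` on that block, with `θ = R(t) √(1 + t²/4)`. This `θ` is
`log (√(1 + t²/4) + t/2)²`, and the inverse of that square is `(√(1 + t²/4) - t/2)²`, so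
`cosh θ = 1 + t²/2` and `sinh θ = t √(1 + t²/4)`, which are exactly the entries of `g(t)`. -/

open NormedSpace

section SquareScalarMultipleOfIdempotent

variable {𝔸 : Type*} [Ring 𝔸] [Algebra ℂ 𝔸] {a p : 𝔸} {θ : ℂ}

theorem pow_odd_of_mul_self_eq_smul (hpa : p * a = a) (ha : a * a = θ ^ 2 • p) (k : ℕ) :
    a ^ (2 * k + 1) = θ ^ (2 * k) • a := by
  induction k with
  | zero => simp
  | succ k ih =>
    rw [show 2 * (k + 1) + 1 = 2 + (2 * k + 1) by ring, pow_add, ih, sq, ha, mul_smul_comm,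
      smul_mul_assoc, hpa, smul_smul, ← pow_add]
    ring_nf

theorem pow_even_of_mul_self_eq_smul (hpa : p * a = a) (ha : a * a = θ ^ 2 • p) (k : ℕ) :
    a ^ (2 * k) = θ ^ (2 * k) • p + if k = 0 then 1 - p else 0 := by
  cases k with
  | zero => simp
  | succ k =>
    rw [if_neg k.succ_ne_zero, add_zero, show 2 * (k + 1) = 2 * k + 1 + 1 by ring, pow_succ,
      pow_odd_of_mul_self_eq_smul hpa ha, smul_mul_assoc, ha, smul_smul, ← pow_add]

theorem exp_eq_of_mul_self_eq_smul [TopologicalSpace 𝔸] [IsTopologicalRing 𝔸]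
    [ContinuousSMul ℂ 𝔸] [T2Space 𝔸] (hθ : θ ≠ 0) (hpa : p * a = a) (ha : a * a = θ ^ 2 • p) :
    exp a = (1 - p) + Complex.cosh θ • p + (Complex.sinh θ / θ) • a := by
  rw [exp_eq_tsum ℂ]
  refine HasSum.tsum_eq (HasSum.even_add_odd ?_ ?_)
  · simp_rw [pow_even_of_mul_self_eq_smul hpa ha, smul_add, smul_smul, smul_ite, smul_zero]
    rw [add_comm (1 - p)]
    refine HasSum.add ?_ ?_
    · convert (Complex.hasSum_cosh θ).smul_const p using 2 with k
      simp [div_eq_inv_mul]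
    · convert hasSum_ite_eq 0 (1 - p) using 2 with k
      split_ifs <;> simp_all
  · simp_rw [pow_odd_of_mul_self_eq_smul hpa ha, smul_smul]
    convert ((Complex.hasSum_sinh θ).div_const θ).smul_const a using 2 with k
    rw [pow_succ]
    field_simp

end SquareScalarMultipleOfIdempotent

lemma finProdFinEquiv_symm_fin_four :
    finProdFinEquiv.symm (0 : Fin 4) = ((0 : Fin 2), (0 : Fin 2)) ∧
    finProdFinEquiv.symm (1 : Fin 4) = ((0 : Fin 2), (1 : Fin 2)) ∧
    finProdFinEquiv.symm (2 : Fin 4) = ((1 : Fin 2), (0 : Fin 2)) ∧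
    finProdFinEquiv.symm (3 : Fin 4) = ((1 : Fin 2), (1 : Fin 2)) := by
  decide

lemma K_apply (M : Matrix (Fin 2 × Fin 2) (Fin 2 × Fin 2) ℂ) (i j : Fin 4) :
    K M i j = M (finProdFinEquiv.symm i) (finProdFinEquiv.symm j) := rfl

lemma K_pauliX_kron_pauliX_sub_K_pauliY_kron_pauliY :
    K (PauliX ⊗ₖ PauliX) - K (PauliY ⊗ₖ PauliY) =
      !![0, 0, 0, 2; 0, 0, 0, 0; 0, 0, 0, 0; 2, 0, 0, 0] := by
  obtain ⟨h0, h1, h2, h3⟩ := finProdFinEquiv_symm_fin_four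
  ext i j
  fin_cases i <;> fin_cases j <;> simp [K_apply, h0, h1, h2, h3, PauliX, PauliY] <;> ring

lemma K_pauliZ_kron_one_add_K_one_kron_pauliZ :
    K (PauliZ ⊗ₖ (1 : Matrix (Fin 2) (Fin 2) ℂ)) + K ((1 : Matrix (Fin 2) (Fin 2) ℂ) ⊗ₖ PauliZ) =
      !![2, 0, 0, 0; 0, 0, 0, 0; 0, 0, 0, 0; 0, 0, 0, -2] := by
  obtain ⟨h0, h1, h2, h3⟩ := finProdFinEquiv_symm_fin_four
  ext i j
  fin_cases i <;> fin_cases j <;> simp [K_apply, h0, h1, h2, h3, PauliZ] <;> norm_num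

noncomputable def blockProj : Matrix (Fin 4) (Fin 4) ℂ :=
  !![1, 0, 0, 0; 0, 0, 0, 0; 0, 0, 0, 0; 0, 0, 0, 1]

noncomputable def blockGen (t : ℂ) : Matrix (Fin 4) (Fin 4) ℂ :=
  !![t / 2, 0, 0, 1; 0, 0, 0, 0; 0, 0, 0, 0; 1, 0, 0, -(t / 2)]

lemma blockProj_mul_blockGen (t : ℂ) : blockProj * blockGen t = blockGen t := by
  ext i j
  fin_cases i <;> fin_cases j <;> simp [blockProj, blockGen, Matrix.mul_apply, Fin.sum_univ_four]

lemma blockGen_mul_self (t : ℂ) : blockGen t * blockGen t = (1 + t ^ 2 / 4) • blockProj := by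
  ext i j
  fin_cases i <;> fin_cases j <;>
    simp [blockProj, blockGen, Matrix.mul_apply, Fin.sum_univ_four] <;> ring

lemma smul_blockGen_mul_self (r t : ℝ) :
    ((r : ℂ) • blockGen t) * ((r : ℂ) • blockGen t) =
      ((r * √(1 + t ^ 2 / 4) : ℝ) : ℂ) ^ 2 • blockProj := by
  rw [smul_mul_smul_comm, blockGen_mul_self, smul_smul, Complex.ofReal_mul, mul_pow,
    ← Complex.ofReal_pow √_, Real.sq_sqrt (by positivity)]
  push_cast
  ring_nf

lemma pauli_generator_eq (r t : ℝ) :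
    ((r / 2 : ℝ) : ℂ) • (K (PauliX ⊗ₖ PauliX) - K (PauliY ⊗ₖ PauliY)) +
        ((t * r / 4 : ℝ) : ℂ) • (K (PauliZ ⊗ₖ (1 : Matrix (Fin 2) (Fin 2) ℂ)) +
          K ((1 : Matrix (Fin 2) (Fin 2) ℂ) ⊗ₖ PauliZ)) =
      (r : ℂ) • blockGen t := by
  rw [K_pauliX_kron_pauliX_sub_K_pauliY_kron_pauliY, K_pauliZ_kron_one_add_K_one_kron_pauliZ]
  ext i j
  fin_cases i <;> fin_cases j <;> simp [blockGen] <;> ring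

lemma gMat_eq_block (t : ℝ) :
    gMat t = (1 - blockProj) + ((1 + t ^ 2 / 2 : ℝ) : ℂ) • blockProj + (t : ℂ) • blockGen t := by
  ext i j
  fin_cases i <;> fin_cases j <;> simp [gMat, blockProj, blockGen] <;> ring

lemma sqrt_add_half_mul_sqrt_sub_half (t : ℝ) :
    (√(1 + t ^ 2 / 4) + t / 2) * (√(1 + t ^ 2 / 4) - t / 2) = 1 := by
  linear_combination Real.sq_sqrt (show 0 ≤ 1 + t ^ 2 / 4 by positivity)

lemma sq_sqrt_add_half_pos (t : ℝ) : 0 < (√(1 + t ^ 2 / 4) + t / 2) ^ 2 :=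
  sq_pos_of_ne_zero (left_ne_zero_of_mul_eq_one (sqrt_add_half_mul_sqrt_sub_half t))

lemma inv_sq_sqrt_add_half (t : ℝ) :
    ((√(1 + t ^ 2 / 4) + t / 2) ^ 2)⁻¹ = (√(1 + t ^ 2 / 4) - t / 2) ^ 2 := by
  rw [← inv_pow, inv_eq_of_mul_eq_one_right (sqrt_add_half_mul_sqrt_sub_half t)]

lemma R_mul_sqrt (t : ℝ) :
    R t * √(1 + t ^ 2 / 4) = Real.log ((√(1 + t ^ 2 / 4) + t / 2) ^ 2) := by
  have hu : 0 < √(1 + t ^ 2 / 4) := Real.sqrt_pos.mpr (by positivity)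
  rw [R, div_mul_cancel₀ _ hu.ne']
  congr 1
  linear_combination -Real.sq_sqrt (show 0 ≤ 1 + t ^ 2 / 4 by positivity)

lemma cosh_R_mul_sqrt (t : ℝ) : Real.cosh (R t * √(1 + t ^ 2 / 4)) = 1 + t ^ 2 / 2 := by
  rw [R_mul_sqrt, Real.cosh_log (sq_sqrt_add_half_pos t), inv_sq_sqrt_add_half]
  linear_combination Real.sq_sqrt (show 0 ≤ 1 + t ^ 2 / 4 by positivity)

lemma sinh_R_mul_sqrt (t : ℝ) :
    Real.sinh (R t * √(1 + t ^ 2 / 4)) = t * √(1 + t ^ 2 / 4) := by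
  rw [R_mul_sqrt, Real.sinh_log (sq_sqrt_add_half_pos t), inv_sq_sqrt_add_half]
  ring

lemma R_mul_sqrt_ne_zero {t : ℝ} (ht : t ≠ 0) : R t * √(1 + t ^ 2 / 4) ≠ 0 := by
  intro h
  have hsinh := sinh_R_mul_sqrt t
  rw [h, Real.sinh_zero, eq_comm, mul_eq_zero] at hsinh
  exact hsinh.elim ht (Real.sqrt_pos.mpr (by positivity)).ne'

theorem stmt_2 (t : ℝ) (ht : 0 < t) :
    gMat t = NormedSpace.exp
      (((R t / 2 : ℝ) : ℂ) • (K (PauliX ⊗ₖ PauliX) - K (PauliY ⊗ₖ PauliY)) +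
        ((t * R t / 4 : ℝ) : ℂ) •
          (K (PauliZ ⊗ₖ (1 : Matrix (Fin 2) (Fin 2) ℂ)) +
           K ((1 : Matrix (Fin 2) (Fin 2) ℂ) ⊗ₖ PauliZ))) := by
  have hθ := R_mul_sqrt_ne_zero ht.ne'
  have hpa : blockProj * ((R t : ℂ) • blockGen t) = (R t : ℂ) • blockGen t := by
    rw [mul_smul_comm, blockProj_mul_blockGen]
  rw [pauli_generator_eq, exp_eq_of_mul_self_eq_smul (Complex.ofReal_ne_zero.mpr hθ) hpa
      (smul_blockGen_mul_self _ _), ← Complex.ofReal_cosh, ← Complex.ofReal_sinh,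
    cosh_R_mul_sqrt, sinh_R_mul_sqrt, smul_smul, gMat_eq_block]
  obtain ⟨hR, hu⟩ := mul_ne_zero_iff.mp hθ
  congr 2
  push_cast
  rw [mul_div_mul_right _ _ (Complex.ofReal_ne_zero.mpr hu),
    div_mul_cancel₀ _ (Complex.ofReal_ne_zero.mpr hR)]
end

section
/- Let R(t) = (1+t²/4)^{−1/2} · log(1 + t√(1+t²/4) + t²/2). Then for all real t with 0 < t < 1, |R(t) − t| ≤ t³/6. -/
lemma arsinh_lower_aux (s : ℝ) (hs0 : 0 < s) (hs1 : s < 1 / 2) :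
    s - s ^ 3 / 6 - s ^ 5 / 3 ≤ Real.arsinh s := by
  obtain ⟨c, hc⟩ : ∃ c : ℝ, s - s ^ 3 / 6 - s ^ 5 / 3 = c := ⟨_, rfl⟩
  obtain ⟨u, hu⟩ : ∃ u : ℝ, Real.sqrt (1 + s ^ 2) = u := ⟨_, rfl⟩
  have hss : s ^ 2 ≤ 1 := by nlinarith
  have hu3 : 1 + s ^ 2 / 2 - s ^ 4 / 8 ≤ u := by
    rw [← hu]
    have h := Real.sqrt_le_sqrt (show (1 + s ^ 2 / 2 - s ^ 4 / 8) ^ 2 ≤ 1 + s ^ 2 by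
      nlinarith [pow_nonneg hs0.le 6, pow_nonneg hs0.le 8,
        mul_nonneg (pow_nonneg hs0.le 6) (sub_nonneg.mpr hss)])
    rwa [Real.sqrt_sq (by nlinarith)] at h
  have hq : s ^ 2 ≤ 1 / 4 := by nlinarith
  have hq3 : s ^ 3 ≤ s / 4 := by nlinarith [mul_le_mul_of_nonneg_left hq hs0.le]
  have hq5 : s ^ 5 ≤ s / 16 := by nlinarith [mul_le_mul_of_nonneg_left hq hs0.le, mul_le_mul_of_nonneg_left hq (pow_nonneg hs0.le 3)]
  have hc0 : 0 ≤ c := by rw [← hc]; linarith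
  have hcs' : c ≤ s - s ^ 3 / 6 := by rw [← hc]; nlinarith [pow_nonneg hs0.le 5]
  have hcs : c ≤ s := by nlinarith
  have hc1 : c ≤ 1 := by nlinarith
  have hexp : Real.exp c ≤ 1 + c + c ^ 2 / 2 + c ^ 3 / 6 + c ^ 4 / 24 + c ^ 5 / 100 := by
    have h := Real.exp_bound' hc0 hc1 (n := 5) (by norm_num)
    simp only [Finset.sum_range_succ, Finset.sum_range_zero, Nat.factorial] at h
    norm_num at h
    linarith
  have hc2 : c ^ 2 ≤ (s - s ^ 3 / 6) ^ 2 := pow_le_pow_left₀ hc0 hcs' 2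
  have hc3 : c ^ 3 ≤ s ^ 3 := pow_le_pow_left₀ hc0 hcs 3
  have hc4 : c ^ 4 ≤ s ^ 4 := pow_le_pow_left₀ hc0 hcs 4
  have hc5 : c ^ 5 ≤ s ^ 5 := pow_le_pow_left₀ hc0 hcs 5
  have hfin : 1 + c + c ^ 2 / 2 + c ^ 3 / 6 + c ^ 4 / 24 + c ^ 5 / 100 ≤ s + u := by
    nlinarith [hu3, hc2, hc3, hc4, hc5, pow_nonneg hs0.le 5, pow_nonneg hs0.le 6, hs1.le, hc]
  rw [hc, ← Real.exp_le_exp, Real.exp_arsinh, hu]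
  linarith

theorem stmt_3 (t : ℝ) (ht0 : 0 < t) (ht1 : t < 1) : |R t - t| ≤ t ^ 3 / 6 := by
  obtain ⟨s, hts⟩ : ∃ s : ℝ, t = 2 * s := ⟨t / 2, by ring⟩
  subst hts
  have hs0 : 0 < s := by linarith
  have hs1 : s < 1 / 2 := by linarith
  have hsqnn : (0:ℝ) ≤ 1 + s ^ 2 := by positivity
  have hsq : Real.sqrt (1 + s ^ 2) ^ 2 = 1 + s ^ 2 := Real.sq_sqrt hsqnn
  have h4 : 1 + (2 * s) ^ 2 / 4 = 1 + s ^ 2 := by ring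
  have hkey : 1 + 2 * s * Real.sqrt (1 + (2 * s) ^ 2 / 4) + (2 * s) ^ 2 / 2
      = (s + Real.sqrt (1 + s ^ 2)) ^ 2 := by
    rw [h4]; nlinarith [hsq]
  have hR : R (2 * s) = 2 * Real.arsinh s / Real.sqrt (1 + s ^ 2) := by
    rw [R, hkey, h4, Real.arsinh, Real.log_pow]
    push_cast
    ring
  rw [hR]
  obtain ⟨a, ha⟩ : ∃ a : ℝ, Real.arsinh s = a := ⟨_, rfl⟩
  obtain ⟨u, hu⟩ : ∃ u : ℝ, Real.sqrt (1 + s ^ 2) = u := ⟨_, rfl⟩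
  rw [ha, hu]
  have hu1 : 1 ≤ u := by rw [← hu]; exact Real.one_le_sqrt.mpr (by nlinarith)
  have hu0 : 0 < u := lt_of_lt_of_le one_pos hu1
  have hu2 : u ≤ 1 + s ^ 2 / 2 := by
    rw [← hu]
    have h := Real.sqrt_le_sqrt (show 1 + s ^ 2 ≤ (1 + s ^ 2 / 2) ^ 2 by nlinarith)
    rwa [Real.sqrt_sq (by positivity)] at h
  have ha0 : 0 ≤ a := by rw [← ha]; exact Real.arsinh_nonneg_iff.mpr hs0.le
  have ha_up : a ≤ s := by
    rw [← ha]
    have h1 : s < Real.sinh s := Real.self_lt_sinh_iff.mpr hs0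
    have h2 : Real.arsinh s ≤ Real.arsinh (Real.sinh s) := Real.arsinh_le_arsinh.mpr h1.le
    rwa [Real.arsinh_sinh] at h2
  have ha_lo : s - s ^ 3 / 6 - s ^ 5 / 3 ≤ a := by
    rw [← ha]; exact arsinh_lower_aux s hs0 hs1
  have hup : 2 * a / u ≤ 2 * s := by
    calc 2 * a / u ≤ 2 * a / 1 := by
          apply div_le_div_of_nonneg_left (by linarith) one_pos hu1
      _ = 2 * a := by ring
      _ ≤ 2 * s := by linarith
  have hlow : 2 * s - (2 * s) ^ 3 / 6 ≤ 2 * a / u := by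
    rw [le_div_iff₀ hu0]
    have hpos : 0 ≤ 2 * s - (2 * s) ^ 3 / 6 := by nlinarith
    calc (2 * s - (2 * s) ^ 3 / 6) * u ≤ (2 * s - (2 * s) ^ 3 / 6) * (1 + s ^ 2 / 2) :=
          mul_le_mul_of_nonneg_left hu2 hpos
      _ ≤ 2 * a := by nlinarith [ha_lo]
  have ht3 : 0 ≤ (2 * s) ^ 3 / 6 := by positivity
  rw [abs_le]
  exact ⟨by linarith, by linarith⟩
end

section
/- Let R(t) = (1+t²/4)^{−1/2} · log(1 + t√(1+t²/4) + t²/2) = (1+t²/4)^{−1/2} · arccosh(1 + t²/2). Then the third derivative of R satisfies |R'''(t)| ≤ 1 for all t in the open interval (0,1). -/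
open Real

lemma arsinh_le_self {x : ℝ} (hx : 0 ≤ x) : arsinh x ≤ x := by
  simpa only [sinh_arsinh] using self_le_sinh_iff.mpr (arsinh_nonneg_iff.mpr hx)

lemma R_eq_arsinh (t : ℝ) : R t = 2 * arsinh (t / 2) / √(1 + (t / 2) ^ 2) := by
  have hs : √(1 + t ^ 2 / 4) ^ 2 = 1 + t ^ 2 / 4 := sq_sqrt (by positivity)
  have hsq : 1 + t * √(1 + t ^ 2 / 4) + t ^ 2 / 2 = (t / 2 + √(1 + t ^ 2 / 4)) ^ 2 := by
    linear_combination (-1) * hs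
  rw [R, hsq, log_pow, arsinh, div_pow t 2 2]
  norm_num

lemma hasDerivAt_R (t : ℝ) : HasDerivAt R ((4 - t * R t) / (4 + t ^ 2)) t := by
  have hpos : 0 < 1 + (t / 2) ^ 2 := by positivity
  have hu : HasDerivAt (fun t : ℝ => t / 2) (1 / 2) t := (hasDerivAt_id' t).div_const 2
  have hs : HasDerivAt (fun t : ℝ => 1 + (t / 2) ^ 2) (2 * (t / 2) * (1 / 2)) t := by
    simpa using (hu.fun_pow 2).const_add 1
  have h := (hu.arsinh.const_mul 2).fun_div (hs.sqrt hpos.ne') (sqrt_pos.mpr hpos).ne'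
  refine (h.congr_of_eventuallyEq (.of_forall R_eq_arsinh)).congr_deriv ?_
  have hsq : √(1 + (t / 2) ^ 2) ^ 2 = 1 + (t / 2) ^ 2 := sq_sqrt hpos.le
  have hne : √(1 + (t / 2) ^ 2) ≠ 0 := (sqrt_pos.mpr hpos).ne'
  rw [R_eq_arsinh, smul_eq_mul]
  generalize √(1 + (t / 2) ^ 2) = s at hsq hne ⊢
  field_simp
  linear_combination (4 * t * arsinh (t / 2) - 8 * s) * hsq

lemma hasDerivAt_deriv_R (t : ℝ) :
    HasDerivAt (fun t => (4 - t * R t) / (4 + t ^ 2))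
      ((2 * (t ^ 2 - 2) * R t - 12 * t) / (4 + t ^ 2) ^ 2) t := by
  have h := ((hasDerivAt_id' t).fun_mul (hasDerivAt_R t)).const_sub 4 |>.fun_div
    (((hasDerivAt_id' t).fun_pow 2).const_add 4) (by positivity)
  refine h.congr_deriv ?_
  field_simp
  ring

lemma hasDerivAt_deriv_deriv_R (t : ℝ) :
    HasDerivAt (fun t => (2 * (t ^ 2 - 2) * R t - 12 * t) / (4 + t ^ 2) ^ 2)
      ((4 * (11 * t ^ 2 - 16) + 6 * t * (6 - t ^ 2) * R t) / (4 + t ^ 2) ^ 3) t := by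
  have h := ((((hasDerivAt_id' t).fun_pow 2).sub_const 2).const_mul 2 |>.fun_mul (hasDerivAt_R t)
    |>.fun_sub ((hasDerivAt_id' t).const_mul 12)).fun_div
    ((((hasDerivAt_id' t).fun_pow 2).const_add 4).fun_pow 2) (by positivity)
  refine h.congr_deriv ?_
  field_simp
  ring

lemma iteratedDeriv_three_R (t : ℝ) :
    iteratedDeriv 3 R t = (4 * (11 * t ^ 2 - 16) + 6 * t * (6 - t ^ 2) * R t) / (4 + t ^ 2) ^ 3 := by
  have h1 := funext fun t => (hasDerivAt_R t).deriv
  have h2 := funext fun t => (hasDerivAt_deriv_R t).deriv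
  have h3 := funext fun t => (hasDerivAt_deriv_deriv_R t).deriv
  rw [iteratedDeriv_succ, iteratedDeriv_succ, iteratedDeriv_one, h1, h2, h3]

lemma R_nonneg {t : ℝ} (ht : 0 ≤ t) : 0 ≤ R t := by
  rw [R_eq_arsinh]
  have := arsinh_nonneg_iff.mpr (by positivity : 0 ≤ t / 2)
  positivity

lemma R_le_self {t : ℝ} (ht : 0 ≤ t) : R t ≤ t := by
  have ha := arsinh_nonneg_iff.mpr (by positivity : 0 ≤ t / 2)
  calc R t = 2 * arsinh (t / 2) / √(1 + (t / 2) ^ 2) := R_eq_arsinh t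
    _ ≤ 2 * arsinh (t / 2) := div_le_self (by positivity) (one_le_sqrt.mpr (by nlinarith))
    _ ≤ t := by linarith [arsinh_le_self (by positivity : 0 ≤ t / 2)]

lemma abs_iteratedDeriv_three_R_le_one {t : ℝ} (ht : t ∈ Set.Icc (0 : ℝ) 1) :
    |iteratedDeriv 3 R t| ≤ 1 := by
  obtain ⟨h0, h1⟩ := ht
  have hc : (4 : ℝ) ^ 3 ≤ (4 + t ^ 2) ^ 3 := by gcongr; nlinarith
  have htR : t * R t ≤ 1 := by
    simpa using mul_le_mul h1 ((R_le_self h0).trans h1) (R_nonneg h0) zero_le_one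
  have hR0 : 0 ≤ t * R t := mul_nonneg h0 (R_nonneg h0)
  rw [iteratedDeriv_three_R, abs_div, abs_of_pos (by positivity : (0 : ℝ) < (4 + t ^ 2) ^ 3),
    div_le_one (by positivity), abs_le]
  constructor <;> nlinarith

theorem stmt_4 : ∀ t ∈ Set.Ioo (0:ℝ) 1, |iteratedDeriv 3 R t| ≤ 1 :=
  fun _ ht => abs_iteratedDeriv_three_R_le_one (Set.Ioo_subset_Icc_self ht)
end

section
/- Let H be a Hermitian n×n matrix, W a Hermitian matrix with ‖W‖ ≤ ε, and L, R arbitrary matrices with ‖L‖ ≤ 2 and ‖R‖ ≤ 2. Then the k-th largest singular value of A = L·exp(−H + W)·R satisfies s_k(A) ≤ 4·e^{ε}·e^{−E_k}, where E_k is the k-th smallest eigenvalue of H. -/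
/-!
Write `B = -H + W` and `μ_k` for the `k`-th largest eigenvalue of `B`. The two estimates
`s_k(A) ≤ ‖L‖ ‖R‖ exp μ_k` and `μ_k ≤ ε - E_k` both come from one half of the Courant–Fischer
principle: if `re ⟪P x, x⟫ ≤ c ‖x‖²` on a subspace of dimension `j + 1`, then the `j`-th smallest
eigenvalue of `P` is at most `c`, because that subspace meets the span of the eigenvectors for the
`n - j` largest eigenvalues.

On the span of the eigenvectors of `H` for `E_k, …, E_n` the quadratic form of `B` is at most
`‖W‖ - E_k`, which gives Weyl's bound `μ_k ≤ ε - E_k`. On the span `V` of the eigenvectors of `B`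
for its `n - k + 1` smallest eigenvalues, `‖exp B y‖ ≤ exp μ_k ‖y‖`; so on `R⁻¹ V`, which has
dimension at least `n - k + 1`, `‖A x‖ ≤ ‖L‖ ‖R‖ exp μ_k ‖x‖`, and this bounds the `k`-th largest
eigenvalue `s_k(A)²` of `Aᴴ A`.
-/

open scoped Matrix.Norms.L2Operator

/-- The singular values of a square complex matrix, in decreasing order. -/
noncomputable def svalsDesc {n : ℕ} (A : Matrix (Fin n) (Fin n) ℂ) : Fin n → ℝ := fun k =>
  Real.sqrt
    (((Matrix.isHermitian_conjTranspose_mul_self A).eigenvalues ∘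
        Tuple.sort (Matrix.isHermitian_conjTranspose_mul_self A).eigenvalues) k.rev)

open Module Submodule
open scoped InnerProductSpace

namespace OrthonormalBasis

variable {ι 𝕜 E : Type*} [RCLike 𝕜] [NormedAddCommGroup E] [InnerProductSpace 𝕜 E] [Fintype ι]
  (b : OrthonormalBasis ι 𝕜 E)

theorem finrank_span_image (s : Finset ι) : finrank 𝕜 (span 𝕜 (b '' s)) = s.card := by
  rw [Set.image_eq_range]
  exact (finrank_span_eq_card (b.orthonormal.linearIndependent.comp _ Subtype.val_injective)).trans
    (Fintype.card_coe s)

theorem repr_eq_zero_of_mem_span_image {s : Set ι} {x : E} (hx : x ∈ span 𝕜 (b '' s)) {i : ι}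
    (hi : i ∉ s) : b.repr x i = 0 := by
  rw [b.repr_apply_apply]
  induction hx using Submodule.span_induction with
  | mem y hy =>
    obtain ⟨t, ht, rfl⟩ := hy
    exact b.orthonormal.2 (ne_of_mem_of_not_mem ht hi).symm
  | zero => exact inner_zero_right _
  | add y z _ _ hy hz => rw [inner_add_right, hy, hz, add_zero]
  | smul a y _ hy => rw [inner_smul_right, hy, mul_zero]

theorem norm_sq_eq_sum_repr (x : E) : ‖x‖ ^ 2 = ∑ i, ‖b.repr x i‖ ^ 2 := by
  simp only [b.repr_apply_apply, b.sum_sq_norm_inner_right]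

variable {T : E →ₗ[𝕜] E} {f : ι → ℝ}

theorem repr_apply_of_apply_eq_smul (hT : ∀ i, T (b i) = (f i : 𝕜) • b i) (x : E) (i : ι) :
    b.repr (T x) i = f i * b.repr x i := by
  rw [b.repr_apply_apply]
  conv_lhs => rw [← b.sum_repr x]
  simp only [map_sum, map_smul, hT, smul_smul]
  rw [b.orthonormal.inner_right_fintype, mul_comm]

theorem re_inner_apply_self_eq_sum (hT : ∀ i, T (b i) = (f i : 𝕜) • b i) (x : E) :
    RCLike.re ⟪T x, x⟫_𝕜 = ∑ i, f i * ‖b.repr x i‖ ^ 2 := by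
  rw [← b.repr.inner_map_map, PiLp.inner_apply, map_sum]
  refine Finset.sum_congr rfl fun i _ => ?_
  rw [repr_apply_of_apply_eq_smul b hT, ← smul_eq_mul, inner_smul_left, RCLike.conj_ofReal,
    inner_self_eq_norm_sq_to_K]
  norm_cast

theorem norm_apply_sq_eq_sum (hT : ∀ i, T (b i) = (f i : 𝕜) • b i) (x : E) :
    ‖T x‖ ^ 2 = ∑ i, f i ^ 2 * ‖b.repr x i‖ ^ 2 := by
  simp only [norm_sq_eq_sum_repr b, repr_apply_of_apply_eq_smul b hT, norm_mul, mul_pow,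
    RCLike.norm_ofReal, sq_abs]

theorem le_re_inner_apply_self_of_mem_span_image (hT : ∀ i, T (b i) = (f i : 𝕜) • b i)
    {s : Set ι} {c : ℝ} (hc : ∀ i ∈ s, c ≤ f i) {x : E} (hx : x ∈ span 𝕜 (b '' s)) :
    c * ‖x‖ ^ 2 ≤ RCLike.re ⟪T x, x⟫_𝕜 := by
  rw [re_inner_apply_self_eq_sum b hT, norm_sq_eq_sum_repr b, Finset.mul_sum]
  refine Finset.sum_le_sum fun i _ => ?_
  by_cases hi : i ∈ s
  · exact mul_le_mul_of_nonneg_right (hc i hi) (by positivity)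
  · simp [b.repr_eq_zero_of_mem_span_image hx hi]

theorem norm_apply_sq_le_of_mem_span_image (hT : ∀ i, T (b i) = (f i : 𝕜) • b i)
    {s : Set ι} {c : ℝ} (hc : ∀ i ∈ s, f i ^ 2 ≤ c) {x : E} (hx : x ∈ span 𝕜 (b '' s)) :
    ‖T x‖ ^ 2 ≤ c * ‖x‖ ^ 2 := by
  rw [norm_apply_sq_eq_sum b hT, norm_sq_eq_sum_repr b, Finset.mul_sum]
  refine Finset.sum_le_sum fun i _ => ?_
  by_cases hi : i ∈ s
  · exact mul_le_mul_of_nonneg_right (hc i hi) (by positivity)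
  · simp [b.repr_eq_zero_of_mem_span_image hx hi]

end OrthonormalBasis

theorem Submodule.finrank_le_finrank_comap {K V : Type*} [DivisionRing K] [AddCommGroup V]
    [Module K V] [FiniteDimensional K V] (f : V →ₗ[K] V) (p : Submodule K V) :
    finrank K p ≤ finrank K (p.comap f) := by
  have hker : LinearMap.ker (p.mkQ ∘ₗ f) = p.comap f := by
    rw [LinearMap.ker_comp, Submodule.ker_mkQ]
  have h1 := LinearMap.finrank_range_add_finrank_ker (p.mkQ ∘ₗ f)
  have h2 := (LinearMap.range (p.mkQ ∘ₗ f)).finrank_le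
  have h3 := p.finrank_quotient_add_finrank
  rw [hker] at h1
  omega

namespace Matrix

variable {𝕜 l m : Type*} [RCLike 𝕜] [Fintype l] [DecidableEq l] [Fintype m] {n : ℕ}

theorem norm_toEuclideanLin_apply_le (A : Matrix m l 𝕜) (x : EuclideanSpace 𝕜 l) :
    ‖toEuclideanLin A x‖ ≤ ‖A‖ * ‖x‖ :=
  A.l2_opNorm_mulVec x

theorem re_inner_toEuclideanLin_le (W : Matrix l l 𝕜) (x : EuclideanSpace 𝕜 l) :
    RCLike.re ⟪toEuclideanLin W x, x⟫_𝕜 ≤ ‖W‖ * ‖x‖ ^ 2 :=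
  calc RCLike.re ⟪toEuclideanLin W x, x⟫_𝕜
      ≤ ‖toEuclideanLin W x‖ * ‖x‖ := (RCLike.re_le_norm _).trans (norm_inner_le_norm _ _)
    _ ≤ ‖W‖ * ‖x‖ * ‖x‖ := by grw [W.norm_toEuclideanLin_apply_le x]
    _ = ‖W‖ * ‖x‖ ^ 2 := by ring

theorem re_inner_toEuclideanLin_conjTranspose_mul_self [DecidableEq m] (A : Matrix m l 𝕜)
    (x : EuclideanSpace 𝕜 l) :
    RCLike.re ⟪toEuclideanLin (Aᴴ * A) x, x⟫_𝕜 = ‖toEuclideanLin A x‖ ^ 2 := by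
  rw [toLpLin_mul_same, LinearMap.comp_apply, toEuclideanLin_conjTranspose_eq_adjoint,
    LinearMap.adjoint_inner_left, inner_self_eq_norm_sq]

namespace IsHermitian

variable {A : Matrix (Fin n) (Fin n) 𝕜} (hA : A.IsHermitian)

noncomputable def sortedEigenvalues : Fin n → ℝ :=
  hA.eigenvalues ∘ Tuple.sort hA.eigenvalues

theorem monotone_sortedEigenvalues : Monotone hA.sortedEigenvalues :=
  Tuple.monotone_sort _

noncomputable def sortedEigenvectorBasis : OrthonormalBasis (Fin n) 𝕜 (EuclideanSpace 𝕜 (Fin n)) :=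
  hA.eigenvectorBasis.reindex (Tuple.sort hA.eigenvalues).symm

theorem sortedEigenvectorBasis_apply (i : Fin n) :
    hA.sortedEigenvectorBasis i = hA.eigenvectorBasis (Tuple.sort hA.eigenvalues i) := by
  simp [sortedEigenvectorBasis, OrthonormalBasis.reindex_apply]

theorem toEuclideanLin_cfc_sortedEigenvectorBasis (f : ℝ → ℝ) (i : Fin n) :
    toEuclideanLin (cfc f A) (hA.sortedEigenvectorBasis i) =
      (f (hA.sortedEigenvalues i) : 𝕜) • hA.sortedEigenvectorBasis i := by
  rw [toLpLin_apply, sortedEigenvectorBasis_apply, hA.cfc_eq, IsHermitian.cfc,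
    Unitary.conjStarAlgAut_apply, ← mulVec_mulVec, ← mulVec_mulVec,
    star_eigenvectorUnitary_mulVec, diagonal_mulVec_single, mul_one,
    ← mul_one ((RCLike.ofReal ∘ f ∘ hA.eigenvalues) _), ← smul_eq_mul, Pi.single_smul,
    mulVec_smul, eigenvectorUnitary_mulVec]
  rfl

theorem toEuclideanLin_sortedEigenvectorBasis (i : Fin n) :
    toEuclideanLin A (hA.sortedEigenvectorBasis i) =
      (hA.sortedEigenvalues i : 𝕜) • hA.sortedEigenvectorBasis i := by
  convert hA.toEuclideanLin_cfc_sortedEigenvectorBasis id i using 3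
  · exact (cfc_id ℝ A hA).symm
  · rfl

theorem sortedEigenvalues_le_of_forall_re_inner_le {j : Fin n}
    {S : Submodule 𝕜 (EuclideanSpace 𝕜 (Fin n))} (hS : (j : ℕ) + 1 ≤ finrank 𝕜 S) {c : ℝ}
    (hc : ∀ x ∈ S, RCLike.re ⟪toEuclideanLin A x, x⟫_𝕜 ≤ c * ‖x‖ ^ 2) :
    hA.sortedEigenvalues j ≤ c := by
  set T := span 𝕜 (hA.sortedEigenvectorBasis '' ↑(Finset.Ici j))
  have hT : finrank 𝕜 T = n - j := by rw [OrthonormalBasis.finrank_span_image, Fin.card_Ici]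
  obtain ⟨x, hxS, hxT, hx0⟩ : ∃ x ∈ S, x ∈ T ∧ x ≠ 0 := by
    have hST : ¬Disjoint S T := fun h => by
      have := finrank_add_finrank_le_of_disjoint h
      rw [finrank_euclideanSpace_fin] at this
      omega
    simpa [Submodule.disjoint_def] using hST
  have hlow := hA.sortedEigenvectorBasis.le_re_inner_apply_self_of_mem_span_image
    hA.toEuclideanLin_sortedEigenvectorBasis
    (fun i hi => hA.monotone_sortedEigenvalues (Finset.mem_Ici.mp hi)) hxT
  exact le_of_mul_le_mul_right (hlow.trans (hc x hxS)) (by positivity)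

theorem sortedEigenvalues_neg_add_rev_le {H W : Matrix (Fin n) (Fin n) 𝕜} (hH : H.IsHermitian)
    (hB : (-H + W).IsHermitian) (k : Fin n) :
    hB.sortedEigenvalues k.rev ≤ ‖W‖ - hH.sortedEigenvalues k := by
  refine hB.sortedEigenvalues_le_of_forall_re_inner_le
    (S := span 𝕜 (hH.sortedEigenvectorBasis '' ↑(Finset.Ici k))) ?_ fun x hx => ?_
  · rw [OrthonormalBasis.finrank_span_image, Fin.card_Ici, Fin.val_rev]
    omega
  · have hHx := hH.sortedEigenvectorBasis.le_re_inner_apply_self_of_mem_span_image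
      hH.toEuclideanLin_sortedEigenvectorBasis
      (fun i hi => hH.monotone_sortedEigenvalues (Finset.mem_Ici.mp hi)) hx
    have hWx := W.re_inner_toEuclideanLin_le x
    rw [map_add, map_neg, LinearMap.add_apply, LinearMap.neg_apply, inner_add_left,
      inner_neg_left, map_add, map_neg]
    linarith

theorem norm_toEuclideanLin_exp_apply_le {B : Matrix (Fin n) (Fin n) ℂ} (hB : B.IsHermitian)
    (j : Fin n) {y : EuclideanSpace ℂ (Fin n)}
    (hy : y ∈ span ℂ (hB.sortedEigenvectorBasis '' ↑(Finset.Iic j))) :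
    ‖toEuclideanLin (NormedSpace.exp B) y‖ ≤ Real.exp (hB.sortedEigenvalues j) * ‖y‖ := by
  have hexp := hB.toEuclideanLin_cfc_sortedEigenvectorBasis Real.exp
  rw [CFC.real_exp_eq_normedSpace_exp hB] at hexp
  have hsq := hB.sortedEigenvectorBasis.norm_apply_sq_le_of_mem_span_image hexp
    (c := Real.exp (hB.sortedEigenvalues j) ^ 2)
    (fun i hi => by gcongr; exact hB.monotone_sortedEigenvalues (Finset.mem_Iic.mp hi)) hy
  rw [← mul_pow] at hsq
  exact (pow_le_pow_iff_left₀ (norm_nonneg _) (by positivity) two_ne_zero).mp hsq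

end IsHermitian

theorem svalsDesc_mul_exp_mul_le {B : Matrix (Fin n) (Fin n) ℂ} (hB : B.IsHermitian)
    (L R : Matrix (Fin n) (Fin n) ℂ) (k : Fin n) :
    svalsDesc (L * NormedSpace.exp B * R) k ≤
      ‖L‖ * ‖R‖ * Real.exp (hB.sortedEigenvalues k.rev) := by
  set A := L * NormedSpace.exp B * R
  set c := ‖L‖ * ‖R‖ * Real.exp (hB.sortedEigenvalues k.rev)
  suffices (isHermitian_conjTranspose_mul_self A).sortedEigenvalues k.rev ≤ c ^ 2 from
    (Real.sqrt_le_sqrt this).trans_eq (Real.sqrt_sq (by positivity))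
  set V := span ℂ (hB.sortedEigenvectorBasis '' ↑(Finset.Iic k.rev))
  refine IsHermitian.sortedEigenvalues_le_of_forall_re_inner_le _
    (S := V.comap (toEuclideanLin R)) ?_ fun x hx => ?_
  · refine le_of_eq_of_le ?_ (V.finrank_le_finrank_comap _)
    rw [OrthonormalBasis.finrank_span_image, Fin.card_Iic]
  · have hexp := hB.norm_toEuclideanLin_exp_apply_le k.rev (Submodule.mem_comap.mp hx)
    rw [re_inner_toEuclideanLin_conjTranspose_mul_self, ← mul_pow]
    gcongr
    calc ‖toEuclideanLin A x‖
        = ‖toEuclideanLin L (toEuclideanLin (NormedSpace.exp B) (toEuclideanLin R x))‖ := by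
          simp only [A, toLpLin_mul_same, LinearMap.comp_apply]
      _ ≤ ‖L‖ * (Real.exp (hB.sortedEigenvalues k.rev) * (‖R‖ * ‖x‖)) := by
          grw [L.norm_toEuclideanLin_apply_le, hexp, R.norm_toEuclideanLin_apply_le]
      _ = c * ‖x‖ := by ring

end Matrix

theorem stmt_6 {n : ℕ} (H W L R : Matrix (Fin n) (Fin n) ℂ) (ε : ℝ)
    (hH : H.IsHermitian) (hW : W.IsHermitian) (hWε : ‖W‖ ≤ ε)
    (hL : ‖L‖ ≤ 2) (hR : ‖R‖ ≤ 2) :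
    ∀ k : Fin n,
      svalsDesc (L * NormedSpace.exp (-H + W) * R) k ≤
        4 * Real.exp ε *
          Real.exp (-((hH.eigenvalues ∘ Tuple.sort hH.eigenvalues) k)) := by
  intro k
  have hB := hH.neg.add hW
  calc svalsDesc (L * NormedSpace.exp (-H + W) * R) k
      ≤ ‖L‖ * ‖R‖ * Real.exp (hB.sortedEigenvalues k.rev) :=
        Matrix.svalsDesc_mul_exp_mul_le hB L R k
    _ ≤ 2 * 2 * Real.exp (ε - hH.sortedEigenvalues k) := by
      gcongr
      exact (hH.sortedEigenvalues_neg_add_rev_le hB k).trans (by linarith)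
    _ = 4 * Real.exp ε * Real.exp (-hH.sortedEigenvalues k) := by
      rw [sub_eq_add_neg, Real.exp_add]
      ring
end

section
/- Let (Z_k)_{k=0}^{N} be a log-concave sequence of positive reals (Z_k² ≥ Z_{k−1}Z_{k+1} for 1 ≤ k ≤ N−1), fix 1 ≤ k ≤ N, and suppose α > 0 approximates Z_{k−1}/Z_k within ratio 1 + ε/(2N) for some ε ∈ (0,1), i.e. (1+ε/(2N))^{−1}·Z_{k−1}/Z_k ≤ α ≤ (1+ε/(2N))·Z_{k−1}/Z_k. Then for every 0 ≤ i ≤ N, the quantities P_j = Z_j·α^j / (Σ_{m=0}^{N} Z_m·α^m) satisfy P_k ≥ P_i/2, and consequently P_k ≥ 1/(2(N+1)). -/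
theorem stmt_9 (N k : ℕ) (Z : ℕ → ℝ) (α ε : ℝ)
    (hZ : ∀ j ≤ N, 0 < Z j)
    (hlc : ∀ j, 1 ≤ j → j ≤ N - 1 → Z (j - 1) * Z (j + 1) ≤ Z j ^ 2)
    (hk1 : 1 ≤ k) (hkN : k ≤ N)
    (hε : ε ∈ Set.Ioo (0:ℝ) 1) (hα : 0 < α)
    (hαl : (1 + ε / (2 * N))⁻¹ * (Z (k - 1) / Z k) ≤ α)
    (hαu : α ≤ (1 + ε / (2 * N)) * (Z (k - 1) / Z k)) :
    (∀ i ≤ N,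
        (Z i * α ^ i / ∑ m ∈ Finset.range (N + 1), Z m * α ^ m) / 2 ≤
          Z k * α ^ k / ∑ m ∈ Finset.range (N + 1), Z m * α ^ m) ∧
      1 / (2 * (N + 1)) ≤ Z k * α ^ k / ∑ m ∈ Finset.range (N + 1), Z m * α ^ m := by
  obtain ⟨hε0, hε1⟩ := hε
  have hN1 : 1 ≤ N := le_trans hk1 hkN
  have hNpos : (0:ℝ) < N := by exact_mod_cast hN1
  set c : ℝ := 1 + ε / (2 * N) with hc
  have hc1 : 1 ≤ c := by
    have : 0 < ε / (2 * N) := by positivity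
    simp [hc]; linarith
  have hc0 : (0:ℝ) < c := by linarith
  -- ratio monotonicity
  have hstep : ∀ j, 1 ≤ j → j + 1 ≤ N → Z (j - 1) / Z j ≤ Z j / Z (j + 1) := by
    intro j hj hjN
    have h := hlc j hj (by omega)
    have hj0 := hZ j (by omega)
    have hj1 := hZ (j + 1) (by omega)
    rw [div_le_div_iff₀ hj0 hj1]
    nlinarith
  have hmono : ∀ a b, 1 ≤ a → a ≤ b → b ≤ N → Z (a - 1) / Z a ≤ Z (b - 1) / Z b := by
    intro a b ha hab
    induction b, hab using Nat.le_induction with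
    | base => intro _; exact le_refl _
    | succ b hab ih =>
      intro hbN
      have hb1 : 1 ≤ b := le_trans ha hab
      have h1 : Z (b - 1) / Z b ≤ Z b / Z (b + 1) := hstep b hb1 hbN
      have h2 := ih (by omega)
      have hbb : b + 1 - 1 = b := by omega
      rw [hbb]
      exact le_trans h2 h1
  -- bounds on the target ratio
  have hrk : Z (k - 1) / Z k ≤ c * α := by
    have := hαl
    rw [inv_mul_le_iff₀ hc0] at this
    linarith [this]
  have hrk' : α ≤ c * (Z (k - 1) / Z k) := hαu
  -- down step
  have hdown : ∀ i, 1 ≤ i → i ≤ k → Z (i - 1) * α ^ (i - 1) ≤ c * (Z i * α ^ i) := by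
    intro i hi hik
    have hiZ := hZ i (by omega)
    have hri : Z (i - 1) / Z i ≤ c * α := le_trans (hmono i k hi hik hkN) hrk
    have h1 : Z (i - 1) ≤ c * α * Z i := by
      rw [div_le_iff₀ hiZ] at hri; linarith
    have hpe : α ^ i = α * α ^ (i - 1) := by
      conv_lhs => rw [show i = (i - 1) + 1 by omega]
      rw [pow_succ]; ring
    rw [hpe]
    have hap : (0:ℝ) ≤ α ^ (i - 1) := by positivity
    nlinarith [mul_le_mul_of_nonneg_right h1 hap]
  -- up step
  have hup : ∀ i, k ≤ i → i + 1 ≤ N → Z (i + 1) * α ^ (i + 1) ≤ c * (Z i * α ^ i) := by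
    intro i hki hiN
    have hi1Z := hZ (i + 1) (by omega)
    have hri : α ≤ c * (Z i / Z (i + 1)) := by
      have h := hmono k (i + 1) hk1 (by omega) hiN
      have : i + 1 - 1 = i := by omega
      rw [this] at h
      calc α ≤ c * (Z (k - 1) / Z k) := hrk'
        _ ≤ c * (Z i / Z (i + 1)) := by
            exact mul_le_mul_of_nonneg_left h (le_of_lt hc0)
    have h1 : Z (i + 1) * α ≤ c * Z i := by
      rw [← mul_div_assoc, le_div_iff₀ hi1Z] at hri
      linarith
    have hap : (0:ℝ) ≤ α ^ i := by positivity
    rw [pow_succ]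
    nlinarith [mul_le_mul_of_nonneg_right h1 hap]
  -- power bound
  have hpow1 : ∀ n, n ≤ N → c ^ n ≤ 1 + (n : ℝ) * ε / N := by
    intro n
    induction n with
    | zero => intro _; simp
    | succ n ih =>
      intro hn
      have h1 := ih (by omega)
      have hnN : (n : ℝ) + 1 ≤ N := by exact_mod_cast hn
      have hcpos : (0:ℝ) ≤ c ^ n := by positivity
      rw [pow_succ]
      have h2 : c ^ n * c ≤ (1 + (n : ℝ) * ε / N) * c :=
        mul_le_mul_of_nonneg_right h1 (le_of_lt hc0)
      refine le_trans h2 ?_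
      rw [hc]
      push_cast
      have hn0 : (0:ℝ) ≤ (n:ℝ) := Nat.cast_nonneg n
      have h2N : (0:ℝ) < 2 * ↑N := by positivity
      rw [← sub_nonneg]
      have expand : 1 + (↑n + 1) * ε / ↑N - (1 + ↑n * ε / ↑N) * (1 + ε / (2 * ↑N)) =
          (ε * (↑N - ↑n * ε)) / (2 * ↑N * ↑N) := by
        field_simp
        ring
      rw [expand]
      apply div_nonneg _ (by positivity)
      have : ↑n * ε ≤ (↑N : ℝ) := by nlinarith
      nlinarith
  have hpow : ∀ n, n ≤ N → c ^ n ≤ 2 := by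
    intro n hn
    have h1 := hpow1 n hn
    have hnN : (n : ℝ) ≤ N := by exact_mod_cast hn
    have : (n : ℝ) * ε / N ≤ ε := by
      rw [div_le_iff₀ hNpos]
      nlinarith
    linarith
  -- chains
  have hkpos : 0 < Z k * α ^ k := by
    have := hZ k hkN; positivity
  have hdchain : ∀ d, d ≤ k → Z (k - d) * α ^ (k - d) ≤ c ^ d * (Z k * α ^ k) := by
    intro d
    induction d with
    | zero => intro _; simp
    | succ d ih =>
      intro hd
      have h1 := ih (by omega)
      have heq : k - (d + 1) = (k - d) - 1 := by omega
      rw [heq]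
      have h2 := hdown (k - d) (by omega) (by omega)
      calc Z (k - d - 1) * α ^ (k - d - 1) ≤ c * (Z (k - d) * α ^ (k - d)) := h2
        _ ≤ c * (c ^ d * (Z k * α ^ k)) := mul_le_mul_of_nonneg_left h1 (le_of_lt hc0)
        _ = c ^ (d + 1) * (Z k * α ^ k) := by ring
  have huchain : ∀ d, k + d ≤ N → Z (k + d) * α ^ (k + d) ≤ c ^ d * (Z k * α ^ k) := by
    intro d
    induction d with
    | zero => intro _; simp
    | succ d ih =>
      intro hd
      have h1 := ih (by omega)
      have h2 := hup (k + d) (by omega) (by omega)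
      have heq : k + (d + 1) = (k + d) + 1 := by omega
      rw [heq]
      calc Z (k + d + 1) * α ^ (k + d + 1) ≤ c * (Z (k + d) * α ^ (k + d)) := h2
        _ ≤ c * (c ^ d * (Z k * α ^ k)) := mul_le_mul_of_nonneg_left h1 (le_of_lt hc0)
        _ = c ^ (d + 1) * (Z k * α ^ k) := by ring
  have hkey : ∀ i ≤ N, Z i * α ^ i ≤ 2 * (Z k * α ^ k) := by
    intro i hi
    rcases le_or_gt i k with h | h
    · have hd := hdchain (k - i) (by omega)
      have heq : k - (k - i) = i := by omega
      rw [heq] at hd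
      have hp := hpow (k - i) (by omega)
      calc Z i * α ^ i ≤ c ^ (k - i) * (Z k * α ^ k) := hd
        _ ≤ 2 * (Z k * α ^ k) := mul_le_mul_of_nonneg_right hp (le_of_lt hkpos)
    · have hd := huchain (i - k) (by omega)
      have heq : k + (i - k) = i := by omega
      rw [heq] at hd
      have hp := hpow (i - k) (by omega)
      calc Z i * α ^ i ≤ c ^ (i - k) * (Z k * α ^ k) := hd
        _ ≤ 2 * (Z k * α ^ k) := mul_le_mul_of_nonneg_right hp (le_of_lt hkpos)
  -- sum positivity and bound
  set S := ∑ m ∈ Finset.range (N + 1), Z m * α ^ m with hS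
  have hSpos : 0 < S := by
    apply Finset.sum_pos
    · intro m hm
      have := hZ m (by simpa using Nat.lt_succ_iff.mp (Finset.mem_range.mp hm))
      positivity
    · exact ⟨0, Finset.mem_range.mpr (by omega)⟩
  have hSle : S ≤ (N + 1 : ℝ) * (2 * (Z k * α ^ k)) := by
    calc S ≤ ∑ m ∈ Finset.range (N + 1), 2 * (Z k * α ^ k) := by
          apply Finset.sum_le_sum
          intro m hm
          exact hkey m (by have := Finset.mem_range.mp hm; omega)
      _ = (N + 1 : ℝ) * (2 * (Z k * α ^ k)) := by
          rw [Finset.sum_const, Finset.card_range, nsmul_eq_mul]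
          push_cast
          ring
  clear_value S
  have hS2 : (0:ℝ) < S * 2 := by linarith
  have hN2 : (0:ℝ) < 2 * ((N:ℝ) + 1) := by positivity
  constructor
  · intro i hi
    have hX := hkey i hi
    rw [div_div, div_le_div_iff₀ hS2 hSpos]
    calc Z i * α ^ i * S ≤ 2 * (Z k * α ^ k) * S :=
          mul_le_mul_of_nonneg_right hX hSpos.le
      _ = Z k * α ^ k * (S * 2) := by ring
  · rw [div_le_div_iff₀ hN2 hSpos]
    calc 1 * S = S := one_mul S
      _ ≤ ((N:ℝ) + 1) * (2 * (Z k * α ^ k)) := hSle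
      _ = Z k * α ^ k * (2 * ((N:ℝ) + 1)) := by ring
end
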